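/- Let π be the stationary probability measure of a SVLMC defined by an irreducible probabilized infinite comb. Then for all finite words w, w' over A = {0,1}, π(w1w')·π(1) = π(w1)·π(1w'). -/
import Mathlib


open MeasureTheory
open ProbabilityTheory (Kernel IsMarkovKernel)
open scoped ENNReal

namespace VLMC

/-- Left-infinite sequences over the alphabet `{0,1}`; `s 0` is the rightmost
(most recent) letter, `s 1` the one before it, etc. -/
abbrev L : Type := ℕ → Bool

/-- Append the letter `b` on the right of the left-infinite sequence `s`. -/
def extend (b : Bool) (s : L) : L := fun n => match n with
  | 0 => b
  | k + 1 => s k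

/-- Sequences whose letters, read from the rightmost one leftwards, start with `u`. -/
def cylRev (u : List Bool) : Set L := {s | ∀ i < u.length, s i = u.getD i false}

/-- The cylinder `Lw` of left-infinite sequences admitting the finite word `w` as a suffix. -/
def cyl (w : List Bool) : Set L := cylRev w.reverse

/-- `π` is a stationary (invariant) probability measure for the kernel `κ`. -/
def IsStationary (κ : Kernel L L) (π : Measure L) : Prop :=
  ∀ B : Set L, MeasurableSet B → π B = ∫⁻ s, κ s B ∂π

/-- `cₙ = ∏_{k=0}^{n-1} q_{0ᵏ1}(0)` (with `c₀ = 1`), for the infinite comb. -/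
noncomputable def combC (q : ℕ → Bool → ℝ≥0∞) (n : ℕ) : ℝ≥0∞ :=
  ∏ k ∈ Finset.range n, q k false

/-- The left-infinite sequence `0^∞`. -/
def zeroSeq : L := fun _ => false

/-- `κ` is the transition kernel of the VLMC associated with the probabilized
infinite comb whose contexts are the words `0ⁿ1`, `n ≥ 0` (with probability
measures `q n` on the alphabet) and the infinite word `0^∞` (with probability
measure `qinf`) : from a state with context `0ⁿ1` (i.e. ending with `10ⁿ`),
a letter `α` is appended on the right with probability `q n α`, and from the
state `0^∞` with probability `qinf α`. -/
def IsCombKernel (q : ℕ → Bool → ℝ≥0∞) (qinf : Bool → ℝ≥0∞) (κ : Kernel L L) : Prop :=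
  (∀ (n : ℕ) (s : L), s ∈ cylRev (List.replicate n false ++ [true]) →
      κ s = q n false • Measure.dirac (extend false s)
          + q n true • Measure.dirac (extend true s)) ∧
  κ zeroSeq = qinf false • Measure.dirac (extend false zeroSeq)
            + qinf true • Measure.dirac (extend true zeroSeq)

lemma measurableSet_cylRev (u : List Bool) : MeasurableSet (cylRev u) := by
  have h : cylRev u = ⋂ i ∈ Finset.range u.length,
      (fun s : L => s i) ⁻¹' {u.getD i false} := by
    ext s
    simp only [cylRev, Set.mem_setOf_eq, Set.mem_iInter, Set.mem_preimage,
      Set.mem_singleton_iff, Finset.mem_range]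
  rw [h]
  exact MeasurableSet.biInter (Finset.range u.length).countable_toSet
    (fun i _ => (measurable_pi_apply i) (measurableSet_singleton _))

lemma extend_mem_cylRev_cons {b c : Bool} {s : L} {v : List Bool} :
    extend b s ∈ cylRev (c :: v) ↔ b = c ∧ s ∈ cylRev v := by
  constructor
  · intro h
    refine ⟨h 0 (by simp), fun i hi => ?_⟩
    have := h (i + 1) (by simpa using Nat.succ_lt_succ hi)
    simpa [extend] using this
  · rintro ⟨rfl, h⟩ i hi
    cases i with
    | zero => simp [extend]
    | succ j =>
        have := h j (by simpa using Nat.lt_of_succ_lt_succ hi)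
        simpa [extend] using this

lemma cylRev_append_subset (u t : List Bool) : cylRev (u ++ t) ⊆ cylRev u := by
  intro s hs i hi
  have h1 : i < (u ++ t).length := by simp; omega
  have := hs i h1
  rwa [List.getD_append _ _ _ _ hi] at this

lemma exists_context (s : L) :
    s = zeroSeq ∨ ∃ n, s ∈ cylRev (List.replicate n false ++ [true]) := by
  classical
  by_cases h : ∀ i, s i = false
  · exact Or.inl (funext h)
  · right
    push_neg at h
    have h' : ∃ i, s i = true := by
      obtain ⟨i, hi⟩ := h
      exact ⟨i, by simpa using hi⟩
    refine ⟨Nat.find h', fun i hi => ?_⟩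
    have hlen : (List.replicate (Nat.find h') false ++ [true]).length = Nat.find h' + 1 := by simp
    rw [hlen] at hi
    rcases Nat.lt_or_ge i (Nat.find h') with hlt | hge
    · have : s i ≠ true := Nat.find_min h' hlt
      have hs : s i = false := by simpa using this
      rw [hs, List.getD_append _ _ _ _ (by simpa using hlt)]
      simp [List.getD_eq_getElem?_getD, List.getElem?_replicate, hlt]
    · have hieq : i = Nat.find h' := by omega
      subst hieq
      rw [Nat.find_spec h']
      rw [List.getD_append_right _ _ _ _ (by simp)]
      simp

lemma kernel_apply_cons {q : ℕ → Bool → ℝ≥0∞} {qinf : Bool → ℝ≥0∞} {κ : Kernel L L}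
    (hκ : IsCombKernel q qinf κ) (m : ℕ) (y : List Bool) (α : Bool) (s : L) :
    κ s (cylRev (α :: (List.replicate m false ++ true :: y)))
      = (cylRev (List.replicate m false ++ true :: y)).indicator (fun _ => q m α) s := by
  classical
  set v := List.replicate m false ++ true :: y with hv
  have hA : MeasurableSet (cylRev (α :: v)) := measurableSet_cylRev _
  have hmem : ∀ b : Bool, extend b s ∈ cylRev (α :: v) ↔ b = α ∧ s ∈ cylRev v :=
    fun b => extend_mem_cylRev_cons
  by_cases hs : s ∈ cylRev v
  · have hctx : s ∈ cylRev (List.replicate m false ++ [true]) := by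
      have : v = (List.replicate m false ++ [true]) ++ y := by simp [hv]
      exact cylRev_append_subset _ _ (by rwa [← this])
    rw [hκ.1 m s hctx]
    rw [Set.indicator_of_mem hs]
    have hd : ∀ b : Bool, Measure.dirac (extend b s) (cylRev (α :: v))
        = if b = α then 1 else 0 := by
      intro b
      rw [Measure.dirac_apply' _ hA]
      by_cases hb : b = α
      · subst hb
        rw [Set.indicator_of_mem ((hmem b).2 ⟨rfl, hs⟩)]
        simp
      · have : extend b s ∉ cylRev (α :: v) := fun h => hb ((hmem b).1 h).1
        simp [Set.indicator_of_notMem this, hb]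
    simp only [Measure.add_apply, Measure.smul_apply, smul_eq_mul, hd]
    cases α <;> simp
  · rw [Set.indicator_of_notMem hs]
    have hno : ∀ b : Bool, Measure.dirac (extend b s) (cylRev (α :: v)) = 0 := by
      intro b
      rw [Measure.dirac_apply' _ hA]
      have : extend b s ∉ cylRev (α :: v) := fun h => hs ((hmem b).1 h).2
      simp [Set.indicator_of_notMem this]
    rcases exists_context s with hz | ⟨n, hn⟩
    · rw [hz] at hno ⊢
      rw [hκ.2]
      simp [Measure.add_apply, hno]
    · rw [hκ.1 n s hn]
      simp [Measure.add_apply, hno]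

lemma step {q : ℕ → Bool → ℝ≥0∞} {qinf : Bool → ℝ≥0∞} {κ : Kernel L L}
    (hκ : IsCombKernel q qinf κ) {π : Measure L} (hπ : IsStationary κ π)
    (m : ℕ) (y : List Bool) (α : Bool) :
    π (cylRev (α :: (List.replicate m false ++ true :: y)))
      = q m α * π (cylRev (List.replicate m false ++ true :: y)) := by
  rw [hπ _ (measurableSet_cylRev _)]
  simp_rw [kernel_apply_cons hκ m y α]
  rw [lintegral_indicator (measurableSet_cylRev _), setLIntegral_const]

lemma decomp (t : List Bool) :
    ∃ m y₀, t ++ [true] = List.replicate m false ++ true :: y₀ := by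
  induction t with
  | nil => exact ⟨0, [], by simp⟩
  | cons a t ih =>
      obtain ⟨m, y₀, h⟩ := ih
      cases a with
      | true => exact ⟨0, t ++ [true], by simp⟩
      | false =>
          exact ⟨m + 1, y₀, by
            simp only [List.cons_append, h, List.replicate_succ, List.cons_append]⟩

lemma renewal_aux {q : ℕ → Bool → ℝ≥0∞} {qinf : Bool → ℝ≥0∞} {κ : Kernel L L}
    (hκ : IsCombKernel q qinf κ) {π : Measure L} (hπ : IsStationary κ π)
    (r : List Bool) :
    ∃ P : ℝ≥0∞, ∀ y, π (cylRev (r ++ true :: y)) = P * π (cylRev (true :: y)) := by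
  induction r with
  | nil => exact ⟨1, fun y => by simp⟩
  | cons α t ih =>
      obtain ⟨P, hP⟩ := ih
      obtain ⟨m, y₀, hm⟩ := decomp t
      refine ⟨q m α * P, fun y => ?_⟩
      have h1 : (α :: t) ++ true :: y
          = α :: (List.replicate m false ++ true :: (y₀ ++ y)) := by
        have : t ++ true :: y = (t ++ [true]) ++ y := by simp
        rw [List.cons_append, this, hm]
        simp
      have h2 : t ++ true :: y = List.replicate m false ++ true :: (y₀ ++ y) := by
        have : t ++ true :: y = (t ++ [true]) ++ y := by simp
        rw [this, hm]; simp
      rw [h1, step hκ hπ, ← h2, hP y, mul_assoc]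

/-- (Renewal property of the stationary infinite comb.)
For all finite words `w, w'`, `π(w1w')·π(1) = π(w1)·π(1w')`. -/
theorem comb_renewal
    (q : ℕ → Bool → ℝ≥0∞) (qinf : Bool → ℝ≥0∞)
    (hq : ∀ n, q n false + q n true = 1) (hqinf : qinf false + qinf true = 1)
    (hirr : qinf false ≠ 1) (hconv : (∑' n, combC q n) ≠ ∞)
    (κ : Kernel L L) [IsMarkovKernel κ] (hκ : IsCombKernel q qinf κ)
    (π : Measure L) [IsProbabilityMeasure π] (hπ : IsStationary κ π)
    (w w' : List Bool) :
    π (cyl (w ++ [true] ++ w')) * π (cyl [true])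
      = π (cyl (w ++ [true])) * π (cyl ([true] ++ w')) := by
  obtain ⟨P, hP⟩ := renewal_aux hκ hπ w'.reverse
  have e1 : π (cyl (w ++ [true] ++ w')) = P * π (cyl (w ++ [true])) := by
    have h1 : (w ++ [true] ++ w').reverse = w'.reverse ++ true :: w.reverse := by simp
    have h2 : (w ++ [true]).reverse = true :: w.reverse := by simp
    rw [cyl, h1, hP, cyl, h2]
  have e2 : π (cyl ([true] ++ w')) = P * π (cyl [true]) := by
    have h1 : ([true] ++ w').reverse = w'.reverse ++ true :: ([] : List Bool) := by simp
    rw [cyl, h1, hP]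
    rfl
  rw [e1, e2]
  ring

end VLMC
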